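/- arXiv:2001.08330 — 6 statements merged into one kernel-verified Lean document; each statement's English description precedes it below -/
import Mathlib

section
/- Let 0 < b < a be real numbers. Then √(ab) < (a − b)/log(a/b) < (a + b + 2√(ab))/4 ≤ (a + b)/2. In particular the logarithmic mean of a and b lies strictly between the geometric mean and the arithmetic mean of the arithmetic and geometric means. -/
/-!
Write `a = b t²` with `t = √(a/b) > 1`. Then `√(ab) = b t`, `log (a/b) = 2 log t`, and after
clearing denominators the two strict inequalities become `2 log t < t - t⁻¹` and
`2 (t - 1)/(t + 1) < log t`. With `t = exp x` these are `x < sinh x` and `tanh (x/2) < x/2`.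
-/

namespace Real

theorem sinh_lt_mul_cosh {x : ℝ} (hx : 0 < x) : sinh x < x * cosh x := by
  have hmono : StrictMonoOn (fun y ↦ y * cosh y - sinh y) (Set.Ici 0) := by
    refine strictMonoOn_of_deriv_pos (convex_Ici 0) (by fun_prop) fun y hy ↦ ?_
    rw [interior_Ici, Set.mem_Ioi] at hy
    have hderiv : HasDerivAt (fun y ↦ y * cosh y - sinh y) (y * sinh y) y :=
      (((hasDerivAt_id y).mul (hasDerivAt_cosh y)).sub (hasDerivAt_sinh y)).congr_deriv (by simp)
    rw [hderiv.deriv]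
    exact mul_pos hy (sinh_pos_iff.2 hy)
  simpa using hmono Set.self_mem_Ici hx.le hx

theorem two_mul_log_lt_sub_inv {y : ℝ} (hy : 1 < y) : 2 * log y < y - y⁻¹ := by
  have h := self_lt_sinh_iff.2 (log_pos hy)
  rw [sinh_log (by positivity)] at h
  linarith

theorem two_mul_sub_div_add_lt_log {y : ℝ} (hy : 1 < y) : 2 * (y - 1) / (y + 1) < log y := by
  set s := √y
  have hs : 1 < s := (lt_sqrt zero_le_one).2 (by simpa)
  have hsy : s ^ 2 = y := sq_sqrt (by linarith)
  have h := sinh_lt_mul_cosh (log_pos hs)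
  rw [sinh_log (by linarith), cosh_log (by linarith), log_sqrt (by linarith)] at h
  field_simp at h
  rw [hsy] at h
  rw [div_lt_iff₀ (by linarith)]
  linarith

end Real

open Real

/-- For reals `0 < b < a`, the logarithmic mean `(a - b) / log (a / b)` lies strictly between
the geometric mean `√(ab)` and `(a + b + 2√(ab))/4`, which in turn is at most the
arithmetic mean `(a + b)/2`. -/
theorem log_mean_between (a b : ℝ) (hb : 0 < b) (hba : b < a) :
    Real.sqrt (a * b) < (a - b) / Real.log (a / b) ∧
    (a - b) / Real.log (a / b) < (a + b + 2 * Real.sqrt (a * b)) / 4 ∧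
    (a + b + 2 * Real.sqrt (a * b)) / 4 ≤ (a + b) / 2 := by
  obtain ⟨t, ht, rfl⟩ : ∃ t, 1 < t ∧ a = b * t ^ 2 :=
    ⟨√(a / b), (lt_sqrt zero_le_one).2 (by rwa [one_pow, one_lt_div hb]),
      by rw [sq_sqrt (div_pos (hb.trans hba) hb).le]; field_simp⟩
  have hgeom : √(b * t ^ 2 * b) = b * t := by
    rw [show b * t ^ 2 * b = (b * t) ^ 2 by ring, sqrt_sq (by positivity)]
  have hlog : log (b * t ^ 2 / b) = 2 * log t := by
    rw [mul_div_cancel_left₀ _ hb.ne', log_pow, Nat.cast_ofNat]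
  have hlog_pos : 0 < log t := log_pos ht
  rw [hgeom, hlog]
  refine ⟨?_, ?_, ?_⟩
  · have h := two_mul_log_lt_sub_inv ht
    field_simp at h
    rw [lt_div_iff₀ (by positivity)]
    nlinarith [mul_lt_mul_of_pos_left h hb]
  · have h := two_mul_sub_div_add_lt_log ht
    rw [div_lt_iff₀ (by linarith)] at h
    rw [div_lt_div_iff₀ (by positivity) (by norm_num)]
    nlinarith [mul_lt_mul_of_pos_left h (by positivity : 0 < b * (t + 1))]
  · nlinarith [mul_nonneg hb.le (sq_nonneg (t - 1))]
end

section
/- Let 0 < r < R be real numbers. Then √(rR) < √((R² − r²)/(2·log(R/r))) < (R + r)/2. -/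
/-!
With `t = R / r`, the lower bound is `log t < sinh (log t) = (t - t⁻¹) / 2` and the upper bound is
`2 (t - 1) / (t + 1) < log t`, i.e. `tanh u < u` for `u = log t / 2`.
-/

open Real

theorem log_lt_sub_inv_div_two {t : ℝ} (ht : 1 < t) : log t < (t - t⁻¹) / 2 := by
  rw [← sinh_log (by positivity)]
  exact self_lt_sinh_iff.mpr (log_pos ht)

theorem two_mul_sub_one_div_add_one_lt_log {t : ℝ} (ht : 1 < t) :
    2 * (t - 1) / (t + 1) < log t := by
  -- `log t = 2 ∑ y^(2k+1) / (2k+1)` with `y = (t - 1) / (t + 1)`; the terms beyond the first are positive.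
  have hseries := hasSum_log_one_add_inv (inv_pos.mpr (sub_pos.mpr ht))
  have hy : 1 / (2 * (t - 1)⁻¹ + 1) = (t - 1) / (t + 1) := by
    have : t - 1 ≠ 0 := by linarith
    rw [one_div, inv_eq_iff_eq_inv, inv_div]
    field_simp
    ring
  rw [hy, inv_inv, add_sub_cancel] at hseries
  have hpos : 0 < (t - 1) / (t + 1) := div_pos (by linarith) (by linarith)
  have hpartial := sum_le_hasSum (Finset.range 2) (fun k _ => by positivity) hseries
  norm_num [Finset.sum_range_succ] at hpartial
  calc 2 * (t - 1) / (t + 1)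
      < 2 * ((t - 1) / (t + 1)) + 2 / 3 * ((t - 1) / (t + 1)) ^ 3 := by
        rw [mul_div_assoc]
        linarith [pow_pos hpos 3]
    _ ≤ log t := hpartial

/-- For reals `0 < r < R`, one has `√(rR) < √((R² - r²)/(2 log(R/r))) < (R + r)/2`. -/
theorem sqrt_mean_bounds (r R : ℝ) (hr : 0 < r) (hrR : r < R) :
    Real.sqrt (r * R) < Real.sqrt ((R ^ 2 - r ^ 2) / (2 * Real.log (R / r))) ∧
    Real.sqrt ((R ^ 2 - r ^ 2) / (2 * Real.log (R / r))) < (R + r) / 2 := by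
  have hR : 0 < R := hr.trans hrR
  have ht : 1 < R / r := (one_lt_div hr).mpr hrR
  have hlog : 0 < log (R / r) := log_pos ht
  have hlower : r * R * (2 * log (R / r)) < R ^ 2 - r ^ 2 := by
    have h := log_lt_sub_inv_div_two ht
    have hid : r * R * (R / r - (R / r)⁻¹) = R ^ 2 - r ^ 2 := by field_simp
    nlinarith [mul_pos hr hR]
  have hupper : R ^ 2 - r ^ 2 < ((R + r) / 2) ^ 2 * (2 * log (R / r)) := by
    have h := two_mul_sub_one_div_add_one_lt_log ht
    have hid : 2 * (R / r - 1) / (R / r + 1) = 2 * (R - r) / (R + r) := by field_simp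
    rw [hid, div_lt_iff₀ (by linarith)] at h
    nlinarith
  constructor
  · exact sqrt_lt_sqrt (by positivity) ((lt_div_iff₀ (by positivity)).mpr hlower)
  · exact (sqrt_lt' (by positivity)).mpr ((div_lt_iff₀ (by positivity)).mpr hupper)
end

section
/- Let 0 < r < R and let z ∈ ℂ satisfy r < |z| < R and Re z > (r + R)/2. Then the reflection of z over the vertical line {Re w = (r + R)/2}, namely the point (r + R) − conj(z), again satisfies r < |(r + R) − conj(z)| < R. In other words, the line {Re w = (r + R)/2} is a partial symmetry axis of the annulus A_{r,R}, with symmetric side {z ∈ A_{r,R} : Re z > (r + R)/2}. -/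
/-! Reflection over `{Re w = a / 2}` is `z ↦ a - conj z`; it fixes that line and swaps `0` and `a`,
so `‖a - conj z‖ = ‖z - a‖`. A point `z` with `Re z > a / 2 > 0` is strictly closer to `a` than
to `0`, which keeps the reflection inside the outer circle. For the inner circle, the reflection
has real part `a - Re z`, and `Re z ≤ ‖z‖ < R` makes this exceed `r` when `a = r + R`. -/

open ComplexConjugate

namespace Complex

theorem norm_ofReal_sub_conj (a : ℝ) (z : ℂ) : ‖(a : ℂ) - conj z‖ = ‖z - a‖ := by
  rw [← norm_conj, map_sub, conj_conj, conj_ofReal, norm_sub_rev]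

theorem sub_re_le_norm_sub_ofReal (a : ℝ) (z : ℂ) : a - z.re ≤ ‖z - a‖ := by
  simpa [norm_sub_rev] using re_le_norm ((a : ℂ) - z)

theorem norm_sub_ofReal_lt_norm {a : ℝ} {z : ℂ} (ha : 0 < a) (hz : a < 2 * z.re) :
    ‖z - a‖ < ‖z‖ := by
  rw [← sq_lt_sq₀ (norm_nonneg _) (norm_nonneg _), Complex.sq_norm, Complex.sq_norm, normSq_apply,
    normSq_apply, sub_re, sub_im, ofReal_re, ofReal_im, sub_zero]
  nlinarith

end Complex

theorem annulus_partial_symmetry_axis_general (r R : ℝ) (hr : 0 < r)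
    (z : ℂ) (h2 : ‖z‖ < R)
    (h3 : (r + R) / 2 < z.re) :
    r < ‖((r : ℂ) + (R : ℂ)) - (starRingEnd ℂ) z‖ ∧
    ‖((r : ℂ) + (R : ℂ)) - (starRingEnd ℂ) z‖ < R := by
  have hcast : (r : ℂ) + (R : ℂ) = ((r + R : ℝ) : ℂ) := by push_cast; rfl
  rw [hcast, Complex.norm_ofReal_sub_conj]
  constructor
  · calc r < r + R - z.re := by linarith [z.re_le_norm]
      _ ≤ ‖z - ↑(r + R)‖ := Complex.sub_re_le_norm_sub_ofReal _ z
  · have hpos : 0 < r + R := by linarith [norm_nonneg z]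
    exact (Complex.norm_sub_ofReal_lt_norm hpos (by linarith)).trans h2

/-- The vertical line `{Re w = (r + R)/2}` is a partial symmetry axis of the annulus
`{r < |z| < R}`: if `r < |z| < R` and `Re z > (r + R)/2` then the reflected point
`(r + R) - conj z` again lies in the annulus. -/
theorem annulus_partial_symmetry_axis (r R : ℝ) (hr : 0 < r) (hrR : r < R)
    (z : ℂ) (h1 : r < ‖z‖) (h2 : ‖z‖ < R)
    (h3 : (r + R) / 2 < z.re) :
    r < ‖((r : ℂ) + (R : ℂ)) - (starRingEnd ℂ) z‖ ∧
    ‖((r : ℂ) + (R : ℂ)) - (starRingEnd ℂ) z‖ < R :=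
  annulus_partial_symmetry_axis_general r R hr z h2 h3
end

section
/- Let z ∈ ℂ satisfy |z| < 1, Im z > 0, and |z + i| < √2 (i.e. z lies in the upper half-disk and inside the circle C = {|w + i| = √2}). Then the reflection of z over C, namely the point w = −i + 2/conj(z + i), satisfies |w| < 1, Im w > 0, and |w + i| > √2. In other words, the reflection over C of the part of the upper half-disk inside C is contained in the part of the upper half-disk outside C. -/
/-!
With `s = |z + i|²` the reflection is `w = -i + 2 (z + i) / s`, and a direct computation gives
`Im w = (1 - |z|²) / s`, `|w|² = 1 - 4 Im z / s` and `|w + i| = 2 / |z + i|`: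
each hypothesis on `z` turns into one of the conclusions on `w`.
-/

open Complex ComplexConjugate

namespace HalfDiskReflection

lemma two_div_conj_add_I (z : ℂ) :
    2 / conj (z + I) = (2 / normSq (z + I) : ℝ) * (z + I) := by
  rw [div_eq_mul_inv, ← normSq_conj, inv_def, conj_conj, normSq_conj]
  push_cast
  ring

lemma normSq_add_I (z : ℂ) : normSq (z + I) = z.re ^ 2 + (z.im + 1) ^ 2 := by
  rw [normSq_apply]
  simp only [add_re, add_im, I_re, I_im, add_zero]
  ring

lemma im_reflection {z : ℂ} (hz : z + I ≠ 0) :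
    (-I + 2 / conj (z + I)).im = (1 - normSq z) / normSq (z + I) := by
  have hs : normSq (z + I) ≠ 0 := (normSq_pos.2 hz).ne'
  rw [two_div_conj_add_I, eq_div_iff hs]
  simp only [add_im, neg_im, I_im, im_ofReal_mul]
  field_simp
  rw [normSq_add_I, normSq_apply]
  ring

lemma normSq_reflection {z : ℂ} (hz : z + I ≠ 0) :
    normSq (-I + 2 / conj (z + I)) = 1 - 4 * z.im / normSq (z + I) := by
  have hs : normSq (z + I) ≠ 0 := (normSq_pos.2 hz).ne'
  rw [two_div_conj_add_I, normSq_apply]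
  simp only [add_re, add_im, neg_re, neg_im, I_re, I_im, re_ofReal_mul, im_ofReal_mul]
  field_simp
  rw [normSq_add_I]
  ring

lemma norm_reflection_add_I (z : ℂ) :
    ‖-I + 2 / conj (z + I) + I‖ = 2 / ‖z + I‖ := by
  rw [neg_add_cancel_comm, norm_div, norm_conj, Complex.norm_ofNat]

end HalfDiskReflection

open HalfDiskReflection in
/-- Reflection over the circle `C = {|w + i| = √2}` maps the part of the upper half-disk
inside `C` into the part of the upper half-disk outside `C`: if `|z| < 1`, `Im z > 0` and
`|z + i| < √2`, then `w = -i + 2/conj(z + i)` satisfies `|w| < 1`, `Im w > 0`, and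
`|w + i| > √2`. -/
theorem halfdisk_circle_reflection (z : ℂ)
    (h1 : ‖z‖ < 1) (h2 : 0 < z.im)
    (h3 : ‖z + Complex.I‖ < Real.sqrt 2) :
    ‖-Complex.I + 2 / (starRingEnd ℂ) (z + Complex.I)‖ < 1 ∧
    0 < (-Complex.I + 2 / (starRingEnd ℂ) (z + Complex.I)).im ∧
    Real.sqrt 2 <
      ‖(-Complex.I + 2 / (starRingEnd ℂ) (z + Complex.I)) + Complex.I‖ := by
  have hz : z + I ≠ 0 := fun h => by
    have := congrArg im h
    simp only [add_im, I_im, zero_im] at this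
    linarith
  have hs : 0 < normSq (z + I) := normSq_pos.2 hz
  refine ⟨?_, ?_, ?_⟩
  · rw [← sq_lt_one_iff₀ (norm_nonneg _), Complex.sq_norm, normSq_reflection hz]
    have : 0 < 4 * z.im / normSq (z + I) := by positivity
    linarith
  · rw [im_reflection hz, ← Complex.sq_norm]
    exact div_pos (sub_pos.2 (pow_lt_one₀ (norm_nonneg z) h1 two_ne_zero)) hs
  · rw [norm_reflection_add_I, lt_div_iff₀ (norm_pos_iff.2 hz)]
    calc √2 * ‖z + I‖ < √2 * √2 := by gcongr
      _ = 2 := Real.mul_self_sqrt zero_le_two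
end

section
/- Let U ⊆ ℂ be a nonempty open connected set, and suppose L₁ and L₂ are two distinct parallel lines (one-dimensional affine subspaces of ℂ ≅ ℝ²) such that, for each j ∈ {1,2}, the reflection σ_{L_j} over L_j maps U onto U and U is L_j-convex, i.e. for every z ∈ U the segment joining z and σ_{L_j}(z) is contained in U. Then there exist θ ∈ ℝ and extended reals a ∈ [−∞, ∞), b ∈ (−∞, ∞] with a < b such that U = {z ∈ ℂ : a < Re(e^{−iθ} z) < b}; in other words, U is all of ℂ, an open half-plane, or an open infinite strip. -/
/-- The line through the point `p` with (unit) direction `v`. -/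
def lineThrough (p v : ℂ) : Set ℂ := {z : ℂ | ∃ t : ℝ, z = p + (t : ℂ) * v}

/-- Orthogonal reflection over the line through `p` with unit direction `v`:
`z ↦ p + v² ⬝ conj (z - p)`. -/
def reflLine (p v : ℂ) (z : ℂ) : ℂ := p + v ^ 2 * (starRingEnd ℂ) (z - p)

/-!
Rotating by `conj v₁` turns both axes into horizontal lines `Im w = c₁` and `Im w = c₂` with
`c₁ ≠ c₂`. Δ-convexity with respect to `Im w = c` says that a vertical slice `{s | x + s i ∈ U}`
containing `y` contains the whole interval of radius `|y - c|` about `c`; a nonempty set of reals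
closed under these operations for two distinct centres is all of `ℝ`. So `U` is the preimage of its
projection to the real axis, which is open and connected, hence an interval with extended-real
endpoints.
-/

open Complex ComplexConjugate Metric Set

/-- Δ-convexity of `U` with respect to the axis `lineThrough p v`. -/
def IsReflConvex (U : Set ℂ) (p v : ℂ) : Prop :=
  ∀ z ∈ U, ∀ t : ℝ, 0 ≤ t → t ≤ 1 → (t : ℂ) * z + (1 - (t : ℂ)) * reflLine p v z ∈ U

theorem reflLine_neg (p v : ℂ) : reflLine p (-v) = reflLine p v := by
  funext z
  simp only [reflLine, neg_sq]

theorem lineThrough_neg (p v : ℂ) : lineThrough p (-v) = lineThrough p v := by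
  ext z
  constructor <;> rintro ⟨t, rfl⟩ <;> exact ⟨-t, by push_cast; ring⟩

section UnitDirection

variable {v : ℂ} (hv : ‖v‖ = 1)
include hv

theorem mul_conj_of_norm_eq_one : v * conj v = 1 := by
  simp [mul_conj', hv]

theorem exp_neg_arg_mul_I_of_norm_eq_one : exp (-(arg v : ℂ) * I) = conj v := by
  conv_rhs => rw [← norm_mul_exp_arg_mul_I v, hv]
  rw [map_mul, ← exp_conj]
  simp

theorem lineThrough_eq_setOf_im (p : ℂ) :
    lineThrough p v = {z | (conj v * z).im = (conj v * p).im} := by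
  have hv' := mul_conj_of_norm_eq_one hv
  ext z
  simp only [lineThrough, mem_ofPred_eq]
  constructor
  · rintro ⟨t, rfl⟩
    rw [mul_add, mul_left_comm, conj_mul', hv]
    simp
  · intro h
    refine ⟨(conj v * (z - p)).re, ?_⟩
    have hreal : ((conj v * (z - p)).re : ℂ) = conj v * (z - p) :=
      ext rfl (by simp only [ofReal_im, mul_sub, sub_im, h, sub_self])
    linear_combination -(z - p) * hv' - v * hreal

theorem reflLine_mul (p w : ℂ) :
    reflLine p v (v * w) = v * (conj w + 2 * (conj v * p).im * I) := by
  have hv' := mul_conj_of_norm_eq_one hv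
  have him : 2 * ((conj v * p).im : ℂ) * I = conj v * p - v * conj p := by
    refine Complex.ext ?_ ?_
    · simp
    · simp
      ring
  rw [reflLine, him]
  simp only [map_sub, map_mul]
  linear_combination (v * conj w - p) * hv'

theorem IsReflConvex.closedBall_subset {U : Set ℂ} {p : ℂ} (h : IsReflConvex U p v) (x : ℝ)
    {y : ℝ} (hy : y ∈ {s : ℝ | v * ⟨x, s⟩ ∈ U}) :
    closedBall (conj v * p).im (dist y (conj v * p).im) ⊆ {s : ℝ | v * ⟨x, s⟩ ∈ U} := by
  set c := (conj v * p).im with hc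
  clear_value c
  intro s hs
  rw [mem_closedBall, Real.dist_eq, Real.dist_eq] at hs
  by_cases hyc : y = c
  · rw [hyc, sub_self, abs_zero, abs_nonpos_iff, sub_eq_zero, ← hyc] at hs
    rwa [hs]
  have hratio : |(s - c) / (y - c)| ≤ 1 := by
    rw [abs_div]
    exact div_le_one_of_le₀ hs (abs_nonneg _)
  obtain ⟨hlo, hhi⟩ := abs_le.mp hratio
  -- The point `x + s i` is the convex combination `t (x + y i) + (1 - t) (x + (2c - y) i)`.
  obtain ⟨t, ht₀, ht₁, hts⟩ : ∃ t : ℝ, 0 ≤ t ∧ t ≤ 1 ∧ t * y + (1 - t) * (2 * c - y) = s :=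
    ⟨(1 + (s - c) / (y - c)) / 2, by linarith, by linarith, by
      field_simp [sub_ne_zero.mpr hyc]
      ring⟩
  have hmem := h _ hy t ht₀ ht₁
  rw [reflLine_mul hv, ← hc] at hmem
  show v * ⟨x, s⟩ ∈ U
  convert hmem using 1
  rw [← mul_assoc, ← mul_assoc, mul_comm (t : ℂ), mul_comm (1 - (t : ℂ)), mul_assoc, mul_assoc,
    ← mul_add]
  congr 1
  apply Complex.ext <;> simp only [add_re, add_im, mul_re, mul_im, ofReal_re, ofReal_im, sub_re,
    sub_im, one_re, one_im, conj_re, conj_im, I_re, I_im, re_ofNat, im_ofNat]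
  · ring
  · linear_combination -hts

end UnitDirection

theorem Real.eq_univ_of_closedBall_subset {S : Set ℝ} {c₁ c₂ : ℝ} (hc : c₁ ≠ c₂)
    (h₁ : ∀ y ∈ S, closedBall c₁ (dist y c₁) ⊆ S) (h₂ : ∀ y ∈ S, closedBall c₂ (dist y c₂) ⊆ S)
    (hS : S.Nonempty) : S = univ := by
  wlog hlt : c₁ < c₂ generalizing c₁ c₂
  · exact this hc.symm h₂ h₁ (hc.lt_or_gt.resolve_left hlt)
  obtain ⟨y, hy⟩ := hS
  set d := c₂ - c₁
  have hd : 0 < d := sub_pos.mpr hlt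
  -- Alternating between the two centres pushes the radius about `c₁` up by `d` each time.
  have hball : ∀ n : ℕ, closedBall c₁ (n * d) ⊆ S := by
    intro n
    induction n with
    | zero =>
      simpa using h₁ y hy (mem_closedBall_self dist_nonneg)
    | succ n ih =>
      have hleft : c₁ - n * d ∈ S := ih (by simp [abs_of_nonneg, hd.le])
      have hright : c₁ + (n + 1) * d ∈ S := h₂ _ hleft (by
        rw [mem_closedBall, Real.dist_eq, Real.dist_eq]
        rw [abs_of_nonneg (by nlinarith), abs_of_nonpos (by nlinarith)]
        linarith)
      have := h₁ _ hright
      rwa [Real.dist_eq, add_sub_cancel_left, abs_of_nonneg (by positivity), ← Nat.cast_add_one]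
        at this
  refine eq_univ_of_forall fun s => ?_
  obtain ⟨n, hn⟩ := exists_nat_ge (dist s c₁ / d)
  exact hball n (mem_closedBall.mpr ((div_le_iff₀ hd).mp hn))

theorem Real.exists_ereal_eq_preimage_Ioo {A : Set ℝ} (hA : IsOpen A) (hc : IsPreconnected A)
    (hne : A.Nonempty) : ∃ a b : EReal, a < b ∧ A = Real.toEReal ⁻¹' Ioo a b := by
  set a := sInf (Real.toEReal '' A)
  set b := sSup (Real.toEReal '' A)
  have hsub : A ⊆ Real.toEReal ⁻¹' Ioo a b := by
    intro x hx
    obtain ⟨y, hyx, hy⟩ := (hA.eventually_mem hx).exists_lt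
    obtain ⟨z, hxz, hz⟩ := (hA.eventually_mem hx).exists_gt
    exact ⟨(sInf_le (mem_image_of_mem _ hy)).trans_lt (EReal.coe_lt_coe_iff.mpr hyx),
      (EReal.coe_lt_coe_iff.mpr hxz).trans_le (le_sSup (mem_image_of_mem _ hz))⟩
  obtain ⟨x₀, hx₀⟩ := hne
  refine ⟨a, b, (hsub hx₀).1.trans (hsub hx₀).2, hsub.antisymm fun x ⟨hax, hxb⟩ => ?_⟩
  obtain ⟨_, ⟨y, hy, rfl⟩, hyx⟩ := sInf_lt_iff.mp hax
  obtain ⟨_, ⟨z, hz, rfl⟩, hxz⟩ := lt_sSup_iff.mp hxb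
  exact hc.ordConnected.out hy hz
    ⟨(EReal.coe_lt_coe_iff.mp hyx).le, (EReal.coe_lt_coe_iff.mp hxz).le⟩

theorem IsReflConvex.mem_iff_of_im_ne {U : Set ℂ} {p₁ p₂ v : ℂ} (hv : ‖v‖ = 1)
    (h₁ : IsReflConvex U p₁ v) (h₂ : IsReflConvex U p₂ v)
    (hc : (conj v * p₁).im ≠ (conj v * p₂).im) (z : ℂ) :
    z ∈ U ↔ (conj v * z).re ∈ (fun w => (conj v * w).re) '' U := by
  have hv' := mul_conj_of_norm_eq_one hv
  refine ⟨mem_image_of_mem _, ?_⟩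
  rintro ⟨w, hw, hre⟩
  have hslice : {s : ℝ | v * ⟨(conj v * z).re, s⟩ ∈ U} = univ := by
    refine Real.eq_univ_of_closedBall_subset hc (fun y hy => h₁.closedBall_subset hv _ hy)
      (fun y hy => h₂.closedBall_subset hv _ hy) ⟨(conj v * w).im, ?_⟩
    rw [mem_ofPred_eq, ← hre, eta, ← mul_assoc, hv', one_mul]
    exact hw
  have hz := hslice ▸ mem_univ (conj v * z).im
  rwa [mem_ofPred_eq, eta, ← mul_assoc, hv', one_mul] at hz

theorem two_parallel_axes_strip_general (U : Set ℂ) (hopen : IsOpen U)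
    (hconn : IsConnected U)
    (p₁ v₁ p₂ v₂ : ℂ) (hv₁ : ‖v₁‖ = 1)
    (hpar : v₂ = v₁ ∨ v₂ = -v₁)
    (hdistinct : lineThrough p₁ v₁ ≠ lineThrough p₂ v₂)
    (hconv₁ : ∀ z ∈ U, ∀ t : ℝ, 0 ≤ t → t ≤ 1 →
      (t : ℂ) * z + (1 - (t : ℂ)) * reflLine p₁ v₁ z ∈ U)
    (hconv₂ : ∀ z ∈ U, ∀ t : ℝ, 0 ≤ t → t ≤ 1 →
      (t : ℂ) * z + (1 - (t : ℂ)) * reflLine p₂ v₂ z ∈ U) :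
    ∃ (θ : ℝ) (a b : EReal), a ≠ ⊤ ∧ b ≠ ⊥ ∧ a < b ∧
      U = {z : ℂ | a < ((Complex.exp (-(θ : ℂ) * Complex.I) * z).re : EReal) ∧
        ((Complex.exp (-(θ : ℂ) * Complex.I) * z).re : EReal) < b} := by
  have hconv₂' : IsReflConvex U p₂ v₁ := by
    rcases hpar with rfl | rfl
    exacts [hconv₂, by simpa only [IsReflConvex, reflLine_neg] using hconv₂]
  have hdistinct' : lineThrough p₁ v₁ ≠ lineThrough p₂ v₁ := by
    rcases hpar with rfl | rfl
    exacts [hdistinct, by simpa only [lineThrough_neg] using hdistinct]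
  have hc : (conj v₁ * p₁).im ≠ (conj v₁ * p₂).im := fun h => hdistinct' <| by
    rw [lineThrough_eq_setOf_im hv₁, lineThrough_eq_setOf_im hv₁, h]
  have hv₁₀ : conj v₁ ≠ 0 := by simp [← norm_ne_zero_iff, hv₁]
  have hproj : Continuous fun w : ℂ => (conj v₁ * w).re := by fun_prop
  have hAopen : IsOpen ((fun w => (conj v₁ * w).re) '' U) :=
    isOpenMap_re.comp (Homeomorph.mulLeft₀ _ hv₁₀).isOpenMap U hopen
  obtain ⟨a, b, hab, hA⟩ := Real.exists_ereal_eq_preimage_Ioo hAopen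
    (hconn.image _ hproj.continuousOn).isPreconnected (hconn.nonempty.image _)
  refine ⟨arg v₁, a, b, ne_top_of_lt hab, ne_bot_of_gt hab, hab, ?_⟩
  ext z
  rw [exp_neg_arg_mul_I_of_norm_eq_one hv₁, IsReflConvex.mem_iff_of_im_ne hv₁ hconv₁ hconv₂' hc,
    hA]
  rfl

/-- If a nonempty domain `U ⊆ ℂ` has two distinct parallel symmetry axes with respect to
each of which it is `Δ`-convex, then `U` is (a rotation of) `{a < Re z < b}` for some
extended reals `a ∈ [-∞, ∞)`, `b ∈ (-∞, ∞]`; i.e. `U` is `ℂ`, a half-plane, or a strip. -/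
theorem two_parallel_axes_strip (U : Set ℂ) (hne : U.Nonempty) (hopen : IsOpen U)
    (hconn : IsConnected U)
    (p₁ v₁ p₂ v₂ : ℂ) (hv₁ : ‖v₁‖ = 1) (hv₂ : ‖v₂‖ = 1)
    (hpar : v₂ = v₁ ∨ v₂ = -v₁)
    (hdistinct : lineThrough p₁ v₁ ≠ lineThrough p₂ v₂)
    (hsym₁ : reflLine p₁ v₁ '' U = U) (hsym₂ : reflLine p₂ v₂ '' U = U)
    (hconv₁ : ∀ z ∈ U, ∀ t : ℝ, 0 ≤ t → t ≤ 1 →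
      (t : ℂ) * z + (1 - (t : ℂ)) * reflLine p₁ v₁ z ∈ U)
    (hconv₂ : ∀ z ∈ U, ∀ t : ℝ, 0 ≤ t → t ≤ 1 →
      (t : ℂ) * z + (1 - (t : ℂ)) * reflLine p₂ v₂ z ∈ U) :
    ∃ (θ : ℝ) (a b : EReal), a ≠ ⊤ ∧ b ≠ ⊥ ∧ a < b ∧
      U = {z : ℂ | a < ((Complex.exp (-(θ : ℂ) * Complex.I) * z).re : EReal) ∧
        ((Complex.exp (-(θ : ℂ) * Complex.I) * z).re : EReal) < b} :=
  two_parallel_axes_strip_general U hopen hconn p₁ v₁ p₂ v₂ hv₁ hpar hdistinct hconv₁ hconv₂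
end

section
/- Let θ ∈ (0, π/3], and let T ⊆ ℂ be the interior of the convex hull of the three points −1, 1, and i·tan θ (the open isosceles triangle with base angles θ). Let B be the interior angle bisector at the vertex 1, i.e. the line through 1 with direction e^{i(π − θ/2)}, so that reflection over B is the map σ(z) = 1 + e^{−iθ}·conj(z − 1), and the open side of B containing the apex i·tan θ is {z : Im((z − 1)·e^{iθ/2}) > 0}. Then for every z ∈ T with Im((z − 1)·e^{iθ/2}) > 0, the reflected point 1 + e^{−iθ}·conj(z − 1) lies in T. In other words, for θ ≤ π/3 the angle bisector B is a partial symmetry axis of T whose symmetric side is the component of T ∖ B adjacent to the shorter side (the leg) of the triangle. -/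
/-!
Translate by `-1`: with `w = z - 1`, the open triangle is cut out by `0 < Im w` (the base),
`Im (w e^{iθ}) < 0` (the leg through `1`) and `Im (w e^{-iθ}) < 2 sin θ` (the leg through `-1`),
and the reflection is `w ↦ w' = e^{-iθ} conj w`. The reflection exchanges the first two
conditions. For the third, `e^{-iθ} + e^{2iθ} = 2 cos (3θ/2) e^{iθ/2}` gives
`Im (w' e^{-iθ}) = Im (w e^{-iθ}) - 2 cos (3θ/2) Im (w e^{iθ/2})`; on the apex side of the
bisector `Im (w e^{iθ/2}) > 0`, and `cos (3θ/2) ≥ 0` exactly when `θ ≤ π/3`.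
-/

open Complex ComplexConjugate Set

theorem ContinuousLinearMap.interior_setOf_le {E : Type*} [NormedAddCommGroup E]
    [NormedSpace ℝ E] [CompleteSpace E] {f : E →L[ℝ] ℝ} (hf : f ≠ 0) (c : ℝ) :
    interior {x | f x ≤ c} = {x | f x < c} := by
  have hsurj : Function.Surjective f := LinearMap.surjective (f := (f : Module.Dual ℝ E))
    fun h => hf (by ext x; simpa using congr($h x))
  change interior (f ⁻¹' Iic c) = f ⁻¹' Iio c
  rw [← (f.isOpenMap hsurj).preimage_interior_eq_interior_preimage f.continuous, interior_Iic]

section IsoscelesTriangle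

variable {t : ℝ}

theorem convexHull_isoscelesTriangle (ht : 0 < t) :
    convexHull ℝ ({-1, 1, (t : ℂ) * I} : Set ℂ) =
      {z | 0 ≤ z.im} ∩ {z | t * z.re + z.im ≤ t} ∩ {z | -t * z.re + z.im ≤ t} := by
  refine Subset.antisymm (convexHull_min ?_ ?_) ?_
  · rintro p (rfl | rfl | rfl) <;> simp [ht.le]
  · exact ((convex_halfSpace_ge imCLM.isLinear 0).inter
      (convex_halfSpace_le (t • reCLM + imCLM).isLinear t)).inter
      (convex_halfSpace_le (-t • reCLM + imCLM).isLinear t)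
  · rintro z ⟨⟨h₁, h₂⟩, h₃⟩
    simp only [mem_ofPred_eq] at h₁ h₂ h₃
    let w : Fin 3 → ℝ :=
      ![(t - t * z.re - z.im) / (2 * t), (t + t * z.re - z.im) / (2 * t), z.im / t]
    let p : Fin 3 → ℂ := ![-1, 1, (t : ℂ) * I]
    have hz : ∑ i, w i • p i = z := by
      apply Complex.ext <;> simp [w, p, Fin.sum_univ_three, -real_smul, smul_re, smul_im]
      · field_simp
        ring
      · field_simp
    rw [← hz]
    refine (convex_convexHull ℝ _).sum_mem (fun i _ => ?_) ?_ (fun i _ => ?_)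
    · fin_cases i <;> simp [w] <;> apply div_nonneg <;> linarith
    · simp [w, Fin.sum_univ_three]
      field_simp
      ring
    · exact subset_convexHull ℝ _ (by fin_cases i <;> simp [p])

theorem interior_convexHull_isoscelesTriangle (ht : 0 < t) :
    interior (convexHull ℝ ({-1, 1, (t : ℂ) * I} : Set ℂ)) =
      {z | 0 < z.im} ∩ {z | t * z.re + z.im < t} ∩ {z | -t * z.re + z.im < t} := by
  have h (s : ℝ) : interior {z : ℂ | s * z.re + z.im ≤ t} = {z | s * z.re + z.im < t} :=
    (s • reCLM + imCLM).interior_setOf_le (fun h => by simpa using congr($h I)) t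
  rw [convexHull_isoscelesTriangle ht, interior_inter, interior_inter,
    interior_setOfPred_le_im, h, h]

end IsoscelesTriangle

theorem exp_neg_mul_I_eq_conj (θ : ℝ) : exp (-θ * I) = conj (exp (θ * I)) := by
  rw [← exp_conj, map_mul, conj_ofReal, conj_I, mul_neg, neg_mul]

theorem im_mul_exp_ofReal_mul_I (w : ℂ) (x : ℝ) :
    (w * exp (x * I)).im = w.re * Real.sin x + w.im * Real.cos x := by
  rw [mul_im, exp_ofReal_mul_I_re, exp_ofReal_mul_I_im]

theorem mem_interior_convexHull_isoscelesTriangle_tan_iff {θ : ℝ} (hθ₀ : 0 < θ)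
    (hθ : θ < Real.pi / 2) {z : ℂ} :
    z ∈ interior (convexHull ℝ ({-1, 1, (Real.tan θ : ℂ) * I} : Set ℂ)) ↔
      0 < (z - 1).im ∧ ((z - 1) * exp (θ * I)).im < 0 ∧
        ((z - 1) * exp (-θ * I)).im < 2 * Real.sin θ := by
  have hcos : 0 < Real.cos θ := Real.cos_pos_of_mem_Ioo ⟨by linarith, hθ⟩
  have htan : Real.cos θ * Real.tan θ = Real.sin θ := by
    rw [Real.tan_eq_sin_div_cos]
    field_simp
  have hneg : exp (-θ * I) = exp ((-θ : ℝ) * I) := by push_cast; rfl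
  rw [interior_convexHull_isoscelesTriangle (Real.tan_pos_of_pos_of_lt_pi_div_two hθ₀ hθ), hneg,
    im_mul_exp_ofReal_mul_I, im_mul_exp_ofReal_mul_I, Real.sin_neg, Real.cos_neg, ← htan]
  simp only [mem_inter_iff, mem_ofPred_eq, sub_re, sub_im, one_re, one_im, sub_zero, and_assoc]
  refine and_congr Iff.rfl (and_congr ?_ ?_) <;>
    rw [← mul_lt_mul_iff_of_pos_left hcos] <;> constructor <;> intro h <;> linarith

section Reflection

variable (θ : ℝ) (w : ℂ)

theorem im_exp_neg_mul_conj : (exp (-θ * I) * conj w).im = -(w * exp (θ * I)).im := by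
  rw [exp_neg_mul_I_eq_conj, ← map_mul, conj_im, mul_comm]

theorem im_exp_neg_mul_conj_mul_exp : (exp (-θ * I) * conj w * exp (θ * I)).im = -w.im := by
  rw [mul_right_comm, ← exp_add, neg_mul, neg_add_cancel, exp_zero, one_mul, conj_im]

theorem im_exp_neg_mul_conj_mul_exp_neg :
    (exp (-θ * I) * conj w * exp (-θ * I)).im =
      (w * exp (-θ * I)).im - 2 * Real.cos (3 * θ / 2) * (w * exp (θ / 2 * I)).im := by
  have hsum : w * exp (-θ * I) + w * exp (2 * θ * I) =
      ((2 * Real.cos (3 * θ / 2) : ℝ) : ℂ) * (w * exp (θ / 2 * I)) := by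
    push_cast
    rw [two_cos, show -(θ : ℂ) * I = -(3 * θ / 2) * I + θ / 2 * I by ring,
      show 2 * (θ : ℂ) * I = 3 * θ / 2 * I + θ / 2 * I by ring, exp_add, exp_add]
    ring
  have hconj : exp (-θ * I) * conj w * exp (-θ * I) = conj (w * exp (2 * θ * I)) := by
    rw [exp_neg_mul_I_eq_conj, show 2 * (θ : ℂ) * I = θ * I + θ * I by ring, exp_add]
    simp only [map_mul]
    ring
  have him := congrArg im hsum
  rw [add_im, im_ofReal_mul] at him
  rw [hconj, conj_im]
  linarith

end Reflection

/-- For `θ ∈ (0, π/3]`, the interior angle bisector at the vertex `1` of the open isosceles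
triangle `T` with vertices `-1`, `1`, `i tan θ` is a partial symmetry axis of `T`: every
point of `T` on the apex side of the bisector reflects over it back into `T`, where the
reflection is `z ↦ 1 + e^{-iθ} conj (z - 1)`. -/
theorem isosceles_bisector_partial_symmetry (θ : ℝ) (hθ0 : 0 < θ)
    (hθ : θ ≤ Real.pi / 3) (z : ℂ)
    (hz : z ∈ interior (convexHull ℝ ({-1, 1, (Real.tan θ : ℂ) * Complex.I} : Set ℂ)))
    (hside : 0 < ((z - 1) * Complex.exp (((θ : ℂ) / 2) * Complex.I)).im) :
    1 + Complex.exp (-(θ : ℂ) * Complex.I) * (starRingEnd ℂ) (z - 1) ∈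
      interior (convexHull ℝ ({-1, 1, (Real.tan θ : ℂ) * Complex.I} : Set ℂ)) := by
  have hθ' : θ < Real.pi / 2 := by linarith [Real.pi_pos]
  rw [mem_interior_convexHull_isoscelesTriangle_tan_iff hθ0 hθ'] at hz ⊢
  obtain ⟨hbase, hleg, hopposite⟩ := hz
  have hcos : 0 ≤ Real.cos (3 * θ / 2) :=
    Real.cos_nonneg_of_neg_pi_div_two_le_of_le (by linarith) (by linarith)
  rw [add_sub_cancel_left]
  refine ⟨?_, ?_, ?_⟩
  · rw [im_exp_neg_mul_conj]; linarith
  · rw [im_exp_neg_mul_conj_mul_exp]; linarith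
  · rw [im_exp_neg_mul_conj_mul_exp_neg]; linarith [mul_nonneg hcos hside.le]
end
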